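/- Let f : ℂ² → ℂ² be the polynomial skew product f(z,w) = (z², w²). Then the chain recurrent set of f (with respect to the Euclidean metric on ℂ²) equals (S¹ × S¹) ∪ ({0} × S¹) ∪ (S¹ × {0}) ∪ {(0,0)}, where S¹ = { z ∈ ℂ : |z| = 1 } is the unit circle. -/

import Mathlib

/-- The Euclidean distance on ℂ², identifying ℂ² with ℝ⁴. -/
noncomputable def deuc2 (x y : ℂ × ℂ) : ℝ :=
  Real.sqrt (‖x.1 - y.1‖ ^ 2 + ‖x.2 - y.2‖ ^ 2)

/-- An ε-chain from `y` to `z` for the map `f`, with respect to an arbitrary distance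
function `ρ`: a finite sequence `y = c 0, …, c m = z` with `m ≥ 1` and
`ρ (f (c k)) (c (k+1)) < ε` for all `k < m`. -/
def EpsChainD {X : Type*} (ρ : X → X → ℝ) (f : X → X) (ε : ℝ) (y z : X) : Prop :=
  ∃ m : ℕ, 1 ≤ m ∧ ∃ c : ℕ → X, c 0 = y ∧ c m = z ∧ ∀ k < m, ρ (f (c k)) (c (k + 1)) < ε

/-- The set `𝓡_ε` of ε-chain recurrent points of `f`, with respect to the distance `ρ`. -/
def chainRecD {X : Type*} (ρ : X → X → ℝ) (f : X → X) (ε : ℝ) : Set X :=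
  {y | EpsChainD ρ f ε y y}

section Aux

open Complex Real

lemma deuc2_fst (x y : ℂ × ℂ) : ‖x.1 - y.1‖ ≤ deuc2 x y := by
  rw [deuc2]
  calc ‖x.1 - y.1‖ = Real.sqrt (‖x.1 - y.1‖ ^ 2) := by
        rw [Real.sqrt_sq (norm_nonneg _)]
    _ ≤ _ := Real.sqrt_le_sqrt (by nlinarith [norm_nonneg (x.2 - y.2)])

lemma deuc2_snd (x y : ℂ × ℂ) : ‖x.2 - y.2‖ ≤ deuc2 x y := by
  rw [deuc2]
  calc ‖x.2 - y.2‖ = Real.sqrt (‖x.2 - y.2‖ ^ 2) := by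
        rw [Real.sqrt_sq (norm_nonneg _)]
    _ ≤ _ := Real.sqrt_le_sqrt (by nlinarith [norm_nonneg (x.1 - y.1)])

lemma deuc2_le (x y : ℂ × ℂ) :
    deuc2 x y ≤ ‖x.1 - y.1‖ + ‖x.2 - y.2‖ := by
  rw [deuc2]
  have h1 := norm_nonneg (x.1 - y.1)
  have h2 := norm_nonneg (x.2 - y.2)
  calc Real.sqrt (‖x.1 - y.1‖ ^ 2 + ‖x.2 - y.2‖ ^ 2)
      ≤ Real.sqrt ((‖x.1 - y.1‖ + ‖x.2 - y.2‖) ^ 2) :=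
        Real.sqrt_le_sqrt (by nlinarith)
    _ = _ := Real.sqrt_sq (by positivity)

lemma circle_chain {ε : ℝ} (hε : 0 < ε) :
    ∃ n : ℕ, 1 ≤ n ∧ ∀ z : ℂ, ‖z‖ = 1 →
      ∃ c : ℕ → ℂ, c 0 = z ∧ c n = z ∧ ∀ k < n, ‖(c k) ^ 2 - c (k + 1)‖ < ε := by
  have hpi := Real.pi_pos
  have hde : 0 ≤ 4 * π / ε := by positivity
  obtain ⟨n, hn⟩ := pow_unbounded_of_one_lt (4 * π / ε + 4 * π + 2) (by norm_num : (1:ℝ) < 2)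
  set M : ℝ := 2 ^ n - 1 with hM
  have hM1 : 4 * π / ε + 4 * π + 1 < M := by simp only [hM]; linarith
  have hMpos : 0 < M := by nlinarith
  have hn1 : 1 ≤ n := by
    rcases Nat.eq_zero_or_pos n with h | h
    · exfalso; rw [h] at hn; norm_num at hn; nlinarith
    · exact h
  refine ⟨n, hn1, fun z hz => ?_⟩
  have hze : Complex.exp ((Complex.arg z : ℂ) * I) = z := by
    have := Complex.norm_mul_exp_arg_mul_I z
    rwa [hz, Complex.ofReal_one, one_mul] at this
  set θ : ℝ := Complex.arg z with hθ
  set N : ℤ := round (M * θ / (2 * π)) with hN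
  set t : ℝ := 2 * π * N / M - θ with ht
  have hMne : M ≠ 0 := ne_of_gt hMpos
  have htval : t = (2 * π / M) * ((N : ℝ) - M * θ / (2 * π)) := by
    rw [ht]; field_simp
  have htabs : |t| ≤ π / M := by
    rw [htval, abs_mul]
    have h1 : |(N : ℝ) - M * θ / (2 * π)| ≤ 1 / 2 := by
      rw [abs_sub_comm]; exact abs_sub_round _
    have h2 : |2 * π / M| = 2 * π / M := abs_of_pos (by positivity)
    rw [h2]
    calc 2 * π / M * |(N:ℝ) - M * θ / (2 * π)| ≤ 2 * π / M * (1/2) := by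
          apply mul_le_mul_of_nonneg_left h1 (by positivity)
      _ = π / M := by ring
  have ht1 : |t| ≤ 1 := by
    refine htabs.trans ?_
    rw [div_le_one hMpos]; nlinarith
  have ht2 : 2 * |t| < ε := by
    have hcc : ε * (4 * π / ε) = 4 * π := by field_simp
    have h4 : 4 * π < ε * M := by nlinarith [mul_lt_mul_of_pos_left hM1 hε]
    have : π / M < ε / 2 := by rw [div_lt_div_iff₀ hMpos (by norm_num : (0:ℝ) < 2)]; nlinarith
    linarith [htabs]
  set c : ℕ → ℂ := fun k => Complex.exp ((((2:ℝ)^k * (θ + t) - t) : ℝ) * I) with hc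
  have hMt : M * t = 2 * π * N - M * θ := by rw [ht]; field_simp
  refine ⟨c, ?_, ?_, ?_⟩
  · simp only [hc, pow_zero, one_mul]
    rw [show θ + t - t = θ by ring]
    exact hze
  · have hang : (2:ℝ)^n * (θ + t) - t = θ + 2 * π * N := by
      have h2n : (2:ℝ)^n = M + 1 := by rw [hM]; ring
      rw [h2n]; nlinarith [hMt]
    simp only [hc, hang]
    rw [show ((θ + 2 * π * N : ℝ) : ℂ) * I = (θ : ℂ) * I + (N : ℂ) * (2 * π * I) by push_cast; ring,
      Complex.exp_add, Complex.exp_int_mul_two_pi_mul_I, mul_one]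
    exact hze
  · intro k _
    have hck : c (k + 1) = (c k) ^ 2 * Complex.exp ((t : ℂ) * I) := by
      simp only [hc, sq, ← Complex.exp_add]
      congr 1
      push_cast
      ring
    have habs : ‖c k‖ = 1 := Complex.norm_exp_ofReal_mul_I _
    have hfac : (c k) ^ 2 - c (k + 1) = (c k) ^ 2 * (1 - Complex.exp ((t : ℂ) * I)) := by
      rw [hck]; ring
    rw [hfac, norm_mul, norm_pow, habs, one_pow, one_mul,
      norm_sub_rev]
    have htI : ‖(t : ℂ) * I‖ = |t| := by
      rw [norm_mul, Complex.norm_I, mul_one, Complex.norm_real, Real.norm_eq_abs]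
    have := Complex.norm_exp_sub_one_le (x := (t : ℂ) * I) (by rw [htI]; exact ht1)
    rw [htI] at this
    linarith

lemma abs_of_rec {z : ℂ}
    (h : ∀ ε > (0:ℝ), ∃ m : ℕ, 1 ≤ m ∧ ∃ c : ℕ → ℂ, c 0 = z ∧ c m = z ∧
      ∀ k < m, ‖(c k) ^ 2 - c (k + 1)‖ < ε) :
    ‖z‖ = 0 ∨ ‖z‖ = 1 := by
  by_contra hcon
  push_neg at hcon
  obtain ⟨h0, h1⟩ := hcon
  set r := ‖z‖ with hr
  have hrpos : 0 < r := lt_of_le_of_ne (norm_nonneg _) (Ne.symm h0)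
  rcases lt_or_gt_of_ne h1 with hlt | hgt
  · have hε : (0:ℝ) < (r - r ^ 2) / 2 := by nlinarith
    obtain ⟨m, hm, c, hc0, hcm, hstep⟩ := h _ hε
    have key : ∀ k, k ≤ m → ‖c k‖ ≤ r ∧ (1 ≤ k → ‖c k‖ < r) := by
      intro k
      induction k with
      | zero => intro _; rw [hc0]; exact ⟨le_refl r, by omega⟩
      | succ j ih =>
        intro hjm
        have hj := ih (by omega)
        have hs := hstep j (by omega)
        have htri := abs_norm_sub_norm_le ((c j) ^ 2) (c (j+1))
        obtain ⟨hlo, hhi⟩ := abs_lt.mp (lt_of_le_of_lt htri hs)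
        have hsq : ‖(c j) ^ 2‖ = (‖c j‖) ^ 2 := norm_pow _ _
        have hb : ‖c (j+1)‖ < r := by
          nlinarith [hj.1, norm_nonneg (c j), hlo, hhi, hsq]
        exact ⟨le_of_lt hb, fun _ => hb⟩
    have := (key m (le_refl m)).2 hm
    rw [hcm] at this
    exact lt_irrefl r this
  · have hε : (0:ℝ) < (r ^ 2 - r) / 2 := by nlinarith
    obtain ⟨m, hm, c, hc0, hcm, hstep⟩ := h _ hε
    have key : ∀ k, k ≤ m → r ≤ ‖c k‖ ∧ (1 ≤ k → r < ‖c k‖) := by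
      intro k
      induction k with
      | zero => intro _; rw [hc0]; exact ⟨le_refl r, by omega⟩
      | succ j ih =>
        intro hjm
        have hj := ih (by omega)
        have hs := hstep j (by omega)
        have htri := abs_norm_sub_norm_le ((c j) ^ 2) (c (j+1))
        obtain ⟨hlo, hhi⟩ := abs_lt.mp (lt_of_le_of_lt htri hs)
        have hsq : ‖(c j) ^ 2‖ = (‖c j‖) ^ 2 := norm_pow _ _
        have hb : r < ‖c (j+1)‖ := by
          nlinarith [hj.1, norm_nonneg (c j), hlo, hhi, hsq]
        exact ⟨le_of_lt hb, fun _ => hb⟩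
    have := (key m (le_refl m)).2 hm
    rw [hcm] at this
    exact lt_irrefl r this

end Aux

/-- the chain recurrent set (Euclidean metric) of the product map
`f(z,w) = (z², w²)` equals `(S¹ × S¹) ∪ ({0} × S¹) ∪ (S¹ × {0}) ∪ {(0,0)}`. -/
theorem stmt_15 :
    (⋂ ε > (0 : ℝ), chainRecD deuc2 (fun x : ℂ × ℂ => (x.1 ^ 2, x.2 ^ 2)) ε) =
      {x : ℂ × ℂ | ‖x.1‖ = 1 ∧ ‖x.2‖ = 1} ∪
      {x : ℂ × ℂ | x.1 = 0 ∧ ‖x.2‖ = 1} ∪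
      {x : ℂ × ℂ | ‖x.1‖ = 1 ∧ x.2 = 0} ∪
      {((0 : ℂ), (0 : ℂ))} := by
  ext x
  simp only [Set.mem_iInter, Set.mem_union, Set.mem_setOf_eq, Set.mem_singleton_iff,
    chainRecD, EpsChainD]
  constructor
  · intro h
    have h1 : ‖x.1‖ = 0 ∨ ‖x.1‖ = 1 := by
      apply abs_of_rec
      intro ε hε
      obtain ⟨m, hm, c, hc0, hcm, hstep⟩ := h ε hε
      refine ⟨m, hm, fun k => (c k).1, by simp [hc0], by simp [hcm], fun k hk => ?_⟩
      exact lt_of_le_of_lt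
        (deuc2_fst ((fun x : ℂ × ℂ => (x.1 ^ 2, x.2 ^ 2)) (c k)) (c (k+1))) (hstep k hk)
    have h2 : ‖x.2‖ = 0 ∨ ‖x.2‖ = 1 := by
      apply abs_of_rec
      intro ε hε
      obtain ⟨m, hm, c, hc0, hcm, hstep⟩ := h ε hε
      refine ⟨m, hm, fun k => (c k).2, by simp [hc0], by simp [hcm], fun k hk => ?_⟩
      exact lt_of_le_of_lt
        (deuc2_snd ((fun x : ℂ × ℂ => (x.1 ^ 2, x.2 ^ 2)) (c k)) (c (k+1))) (hstep k hk)
    rw [norm_eq_zero] at h1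
    rw [norm_eq_zero] at h2
    rcases h1 with h1 | h1 <;> rcases h2 with h2 | h2
    · right; exact Prod.ext h1 h2
    · left; left; right; exact ⟨h1, h2⟩
    · left; right; exact ⟨h1, h2⟩
    · left; left; left; exact ⟨h1, h2⟩
  · intro h ε hε
    rcases h with ((⟨hx1, hx2⟩ | ⟨hx1, hx2⟩) | ⟨hx1, hx2⟩) | hx
    · -- both on the circle
      obtain ⟨n, hn1, hch⟩ := circle_chain (half_pos hε)
      obtain ⟨c, hc0, hcn, hcs⟩ := hch x.1 hx1
      obtain ⟨d, hd0, hdn, hds⟩ := hch x.2 hx2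
      refine ⟨n, hn1, fun k => (c k, d k), Prod.ext hc0 hd0, Prod.ext hcn hdn, fun k hk => ?_⟩
      calc deuc2 ((c k) ^ 2, (d k) ^ 2) (c (k+1), d (k+1))
          ≤ ‖(c k) ^ 2 - c (k+1)‖ + ‖(d k) ^ 2 - d (k+1)‖ :=
            deuc2_le _ _
        _ < ε / 2 + ε / 2 := add_lt_add (hcs k hk) (hds k hk)
        _ = ε := by ring
    · -- first coordinate 0, second on circle
      obtain ⟨n, hn1, hch⟩ := circle_chain (half_pos hε)
      obtain ⟨d, hd0, hdn, hds⟩ := hch x.2 hx2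
      refine ⟨n, hn1, fun k => (0, d k), Prod.ext hx1.symm hd0, Prod.ext hx1.symm hdn,
        fun k hk => ?_⟩
      · calc deuc2 ((0:ℂ) ^ 2, (d k) ^ 2) (0, d (k+1))
            ≤ ‖(0:ℂ) ^ 2 - 0‖ + ‖(d k) ^ 2 - d (k+1)‖ := deuc2_le _ _
          _ < 0 + ε / 2 := by
              rw [show ((0:ℂ) ^ 2 - 0) = 0 by ring, norm_zero]
              exact add_lt_add_of_le_of_lt (le_refl 0) (hds k hk)
          _ ≤ ε := by linarith
    · -- first on circle, second 0
      obtain ⟨n, hn1, hch⟩ := circle_chain (half_pos hε)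
      obtain ⟨c, hc0, hcn, hcs⟩ := hch x.1 hx1
      refine ⟨n, hn1, fun k => (c k, 0), Prod.ext hc0 hx2.symm, Prod.ext hcn hx2.symm,
        fun k hk => ?_⟩
      · calc deuc2 ((c k) ^ 2, (0:ℂ) ^ 2) (c (k+1), 0)
            ≤ ‖(c k) ^ 2 - c (k+1)‖ + ‖(0:ℂ) ^ 2 - 0‖ := deuc2_le _ _
          _ < ε / 2 + 0 := by
              rw [show ((0:ℂ) ^ 2 - 0) = 0 by ring, norm_zero]
              exact add_lt_add_of_lt_of_le (hcs k hk) (le_refl 0)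
          _ ≤ ε := by linarith
    · -- x = (0,0)
      refine ⟨1, le_refl 1, fun _ => ((0:ℂ), (0:ℂ)), by rw [hx], by rw [hx], fun k _ => ?_⟩
      simpa [deuc2] using hε
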